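/- Let n ≥ 3 and 1 ≤ r < n − 1 be integers, and let k > 0 be a real number. Consider the vector κ = (k, k, …, k, −((n−r−1)/(r+1))·k) ∈ ℝⁿ consisting of n − 1 copies of k followed by −((n−r−1)/(r+1))·k. Let e_j denote the j-th elementary symmetric polynomial in n variables. Then: (1) e_j(κ) > 0 for all 1 ≤ j ≤ r; (2) e_{r+1}(κ) = 0; (3) e_j(κ) < 0 for all r + 1 < j ≤ n. -/

import Mathlib

/-- The `j`-th elementary symmetric polynomial of `x₁, …, xₙ`. -/
noncomputable def esymmVal (n j : ℕ) (x : Fin n → ℝ) : ℝ :=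
  ∑ s ∈ Finset.univ.powersetCard j, ∏ i ∈ s, x i

/-! For `κ = (k, …, k, b)` with `m` copies of `k`, expanding along the last entry gives
`e_{i+1}(κ) = C(m, i+1) k^{i+1} + b C(m, i) k^i`. Together with
`(i+1) C(m, i+1) = (m-i) C(m, i)` and `b = -((m-r)/(r+1)) k` this collapses to
`(r+1)(i+1) e_{i+1}(κ) = (m+1)(r-i) C(m, i) k^{i+1}`, so `e_{i+1}(κ)` has the sign of `r - i`. -/
namespace Multiset

variable {R : Type*} [CommSemiring R]

theorem esymm_cons_succ (a : R) (s : Multiset R) (j : ℕ) :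
    (a ::ₘ s).esymm (j + 1) = s.esymm (j + 1) + a * s.esymm j := by
  simp only [esymm, powersetCard_cons, map_add, sum_add, map_map, Function.comp_def, prod_cons,
    sum_map_mul_left]

theorem esymm_replicate (m j : ℕ) (a : R) :
    (replicate m a).esymm j = m.choose j * a ^ j := by
  induction m generalizing j with
  | zero => cases j <;> simp [esymm, powersetCard_zero_right]
  | succ m ih =>
    cases j with
    | zero => simp [esymm]
    | succ j =>
      rw [replicate_succ, esymm_cons_succ, ih, ih, Nat.choose_succ_succ', Nat.cast_add]
      ring

end Multiset

theorem esymmVal_eq_esymm (n j : ℕ) (x : Fin n → ℝ) :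
    esymmVal n j x = (Finset.univ.val.map x).esymm j :=
  (Finset.esymm_map_val x _ j).symm

theorem esymmVal_of_castSucc_last {m : ℕ} (x : Fin (m + 1) → ℝ) (a b : ℝ)
    (hx : ∀ i : Fin m, x i.castSucc = a) (hlast : x (Fin.last m) = b) (j : ℕ) :
    esymmVal (m + 1) (j + 1) x = m.choose (j + 1) * a ^ (j + 1) + b * (m.choose j * a ^ j) := by
  have hmap : Finset.univ.val.map x = b ::ₘ Multiset.replicate m a := by
    rw [Fin.univ_castSuccEmb, Finset.cons_val, Multiset.map_cons, hlast, Finset.map_val,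
      Multiset.map_map]
    simp [Function.comp_def, hx]
  rw [esymmVal_eq_esymm, hmap, Multiset.esymm_cons_succ, Multiset.esymm_replicate,
    Multiset.esymm_replicate]

theorem succ_mul_cast_choose_succ (m j : ℕ) :
    ((j : ℝ) + 1) * m.choose (j + 1) = ((m : ℝ) - j) * m.choose j := by
  rcases le_or_gt j m with h | h
  · rw [← Nat.cast_sub h, mul_comm, mul_comm ((m - j : ℕ) : ℝ)]
    exact_mod_cast Nat.choose_succ_right_eq m j
  · simp [Nat.choose_eq_zero_of_lt h, Nat.choose_eq_zero_of_lt (Nat.lt_succ_of_lt h)]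

theorem exists_pos_esymmVal_eq_mul {m : ℕ} (r i : ℕ) (hi : i ≤ m) {k : ℝ} (hk : 0 < k)
    (κ : Fin (m + 1) → ℝ) (hκ : ∀ l : Fin m, κ l.castSucc = k)
    (hlast : κ (Fin.last m) = -(((m : ℝ) - r) / ((r : ℝ) + 1)) * k) :
    ∃ w > 0, esymmVal (m + 1) (i + 1) κ = ((r : ℝ) - i) * w := by
  have hchoose : (0 : ℝ) < m.choose i := by exact_mod_cast Nat.choose_pos hi
  refine ⟨(m + 1) * m.choose i * k ^ (i + 1) / ((r + 1) * (i + 1)), by positivity, ?_⟩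
  rw [esymmVal_of_castSucc_last κ k _ hκ hlast]
  field_simp
  linear_combination (((r : ℝ) + 1) * k ^ (i + 1)) * succ_mul_cast_choose_succ m i

theorem stmt_19 (n r : ℕ) (hrn : r < n - 1)
    (k : ℝ) (hk : 0 < k)
    (κ : Fin n → ℝ)
    (hκ : ∀ i : Fin n,
      κ i = if (i : ℕ) < n - 1 then k else -(((n : ℝ) - r - 1) / ((r : ℝ) + 1)) * k) :
    (∀ j : ℕ, 1 ≤ j → j ≤ r → 0 < esymmVal n j κ) ∧
    esymmVal n (r + 1) κ = 0 ∧
    (∀ j : ℕ, r + 1 < j → j ≤ n → esymmVal n j κ < 0) := by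
  obtain ⟨m, rfl⟩ : ∃ m, n = m + 1 := ⟨n - 1, by omega⟩
  rw [Nat.add_sub_cancel] at hrn hκ
  have hinit (i : Fin m) : κ i.castSucc = k := by simp [hκ]
  have hlast : κ (Fin.last m) = -(((m : ℝ) - r) / ((r : ℝ) + 1)) * k := by
    rw [hκ, if_neg (by simp)]
    push_cast
    ring
  have hsign (i : ℕ) (hi : i ≤ m) := exists_pos_esymmVal_eq_mul r i hi hk κ hinit hlast
  refine ⟨fun j hj hjr => ?_, ?_, fun j hjr hjn => ?_⟩
  · obtain ⟨i, rfl⟩ : ∃ i, j = i + 1 := ⟨j - 1, by omega⟩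
    obtain ⟨w, hw, he⟩ := hsign i (by omega)
    rw [he]
    exact mul_pos (sub_pos.2 (by exact_mod_cast hjr)) hw
  · obtain ⟨w, -, he⟩ := hsign r hrn.le
    rw [he, sub_self, zero_mul]
  · obtain ⟨i, rfl⟩ : ∃ i, j = i + 1 := ⟨j - 1, by omega⟩
    obtain ⟨w, hw, he⟩ := hsign i (by omega)
    rw [he]
    exact mul_neg_of_neg_of_pos (sub_neg.2 (by exact_mod_cast Nat.succ_lt_succ_iff.1 hjr)) hw
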